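/- arXiv:2009.11636 — 3 statements merged into one kernel-verified Lean document; each statement's English description precedes it below -/
import Mathlib

section
/- There exists a constant C > 0, independent of B̄ and f, such that for every constant vector B̄ = (B̄₁,B̄₂,B̄₃) ∈ ℝ³ with B̄₃ ≠ 0 and every C¹ function f : ℝ³ → ℝ that is 1-periodic in x₁ and x₂, one has ∫_{(0,1)²} |f(x₁,x₂,0)|² dx₁ dx₂ ≤ C ( B̄₃^{−2} ∫_{(0,1)²×(−1,0)} |B̄·∇f(x)|² dx + ∫_{(0,1)²×(−1,0)} |f(x)|² dx ). (This is the Poincaré-type trace inequality |f|₀² ≲ B̄₃^{−2}‖(B̄·∇)f‖₀² + ‖f‖₀² on the horizontally periodic slab Ω₋ with boundary trace taken on Σ.) -/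
/-!
Put `v = B̄ / B̄₃`. Along the characteristic line `t ↦ (y, 0) + t v` the function
`g(t) = f((y, 0) + t v)` has `g' = B̄₃⁻¹ (B̄·∇f)`, and applying the fundamental theorem of calculus
to `(t + 1) g(t)²` gives `g(0)² ≤ ∫₋₁⁰ (2 g² + g'²)`. Integrating this over `y ∈ (0,1)²` and
exchanging the integrals, the slice at height `t` is the horizontal square shifted by `t v`, which
carries the same integral as the unshifted one by horizontal periodicity. Hence the trace is bounded
by `∫_{Ω₋} (2 f² + B̄₃⁻² (B̄·∇f)²)`, and `C = 2` works.
-/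

open MeasureTheory

noncomputable section

/-- The lower slab `𝕋² × (-1,0)`, realized as `(0,1)² × (-1,0) ⊆ ℝ³`. -/
def slabNeg : Set (Fin 3 → ℝ) :=
  {x | x 0 ∈ Set.Ioo (0:ℝ) 1 ∧ x 1 ∈ Set.Ioo (0:ℝ) 1 ∧ x 2 ∈ Set.Ioo (-1:ℝ) 0}

/-- The upper slab `𝕋² × (0,1)`. -/
def slabPos : Set (Fin 3 → ℝ) :=
  {x | x 0 ∈ Set.Ioo (0:ℝ) 1 ∧ x 1 ∈ Set.Ioo (0:ℝ) 1 ∧ x 2 ∈ Set.Ioo (0:ℝ) 1}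

/-- The full slab `𝕋² × (-1,1)`. -/
def slabFull : Set (Fin 3 → ℝ) :=
  {x | x 0 ∈ Set.Ioo (0:ℝ) 1 ∧ x 1 ∈ Set.Ioo (0:ℝ) 1 ∧ x 2 ∈ Set.Ioo (-1:ℝ) 1}

/-- `1`-periodicity in the two horizontal variables. -/
def HPeriodic (f : (Fin 3 → ℝ) → ℝ) : Prop :=
  ∀ x, f (x + Pi.single 0 1) = f x ∧ f (x + Pi.single 1 1) = f x

/-- Partial derivative in direction `i`. -/
def pd (i : Fin 3) (f : (Fin 3 → ℝ) → ℝ) : (Fin 3 → ℝ) → ℝ :=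
  fun x => fderiv ℝ f x (Pi.single i 1)

/-- Iterated partial derivative `∂₁^a ∂₂^b ∂₃^c f`. -/
def pdIter (a b c : ℕ) (f : (Fin 3 → ℝ) → ℝ) : (Fin 3 → ℝ) → ℝ :=
  (pd 0)^[a] ((pd 1)^[b] ((pd 2)^[c] f))

/-- The square of the `H^k` Sobolev norm on the set `S`. -/
def sobSq (k : ℕ) (S : Set (Fin 3 → ℝ)) (f : (Fin 3 → ℝ) → ℝ) : ℝ :=
  ∑ a ∈ Finset.range (k+1), ∑ b ∈ Finset.range (k+1), ∑ c ∈ Finset.range (k+1),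
    if a + b + c ≤ k then ∫ x in S, (pdIter a b c f x)^2 else 0

/-- The square of the anisotropic Sobolev norm `‖f‖_{m,ℓ}²`. -/
def sobAnisoSq (m ℓ : ℕ) (S : Set (Fin 3 → ℝ)) (f : (Fin 3 → ℝ) → ℝ) : ℝ :=
  ∑ a ∈ Finset.range (ℓ+1), ∑ b ∈ Finset.range (ℓ+1),
    if a + b ≤ ℓ then sobSq m S ((pd 0)^[a] ((pd 1)^[b] f)) else 0

/-- Squared Sobolev norm of a vector field (sum over components). -/
def sobSqVec (k : ℕ) (S : Set (Fin 3 → ℝ)) (v : (Fin 3 → ℝ) → Fin 3 → ℝ) : ℝ :=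
  ∑ i : Fin 3, sobSq k S (fun x => v x i)

/-- Squared anisotropic Sobolev norm of a vector field. -/
def sobAnisoSqVec (m ℓ : ℕ) (S : Set (Fin 3 → ℝ)) (v : (Fin 3 → ℝ) → Fin 3 → ℝ) : ℝ :=
  ∑ i : Fin 3, sobAnisoSq m ℓ S (fun x => v x i)

/-- The curl of a vector field. -/
def curl (v : (Fin 3 → ℝ) → Fin 3 → ℝ) : (Fin 3 → ℝ) → Fin 3 → ℝ :=
  fun x => ![pd 1 (fun y => v y 2) x - pd 2 (fun y => v y 1) x,
             pd 2 (fun y => v y 0) x - pd 0 (fun y => v y 2) x,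
             pd 0 (fun y => v y 1) x - pd 1 (fun y => v y 0) x]

/-- The divergence of a vector field. -/
def divg (v : (Fin 3 → ℝ) → Fin 3 → ℝ) : (Fin 3 → ℝ) → ℝ :=
  fun x => pd 0 (fun y => v y 0) x + pd 1 (fun y => v y 1) x + pd 2 (fun y => v y 2) x

/-- The unit square `(0,1)² ⊆ ℝ²`. -/
def square2 : Set (ℝ × ℝ) := (Set.Ioo (0:ℝ) 1) ×ˢ (Set.Ioo (0:ℝ) 1)

/-- Fourier coefficient of a 1-periodic function on `ℝ²`. -/
def fCoeff (g : ℝ × ℝ → ℝ) (ξ : ℤ × ℤ) : ℂ :=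
  ∫ y in square2, (g y : ℂ) *
    Complex.exp ((((-2) * Real.pi * ((ξ.1 : ℝ) * y.1 + (ξ.2 : ℝ) * y.2) : ℝ) : ℂ) * Complex.I)

/-- The square of the Fourier Sobolev norm `|g|_s²` on `𝕋²`. -/
def torusSobSq (s : ℝ) (g : ℝ × ℝ → ℝ) : ℝ :=
  ∑' ξ : ℤ × ℤ, (1 + ((ξ.1 : ℝ)^2 + (ξ.2 : ℝ)^2)) ^ s * ‖fCoeff g ξ‖^2

/-- Squared torus Sobolev norm of a vector-valued boundary function. -/
def torusSobSqVec (s : ℝ) (g : ℝ × ℝ → Fin 3 → ℝ) : ℝ :=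
  ∑ i : Fin 3, torusSobSq s (fun y => g y i)

end

open Set

theorem Continuous.integrableOn_of_isBounded {X E : Type*} [MetricSpace X] [ProperSpace X]
    [MeasurableSpace X] [OpensMeasurableSpace X] [NormedAddCommGroup E] {μ : Measure X}
    [IsFiniteMeasureOnCompacts μ] {φ : X → E} (hφ : Continuous φ) {s : Set X}
    (hs : Bornology.IsBounded s) : IntegrableOn φ s μ :=
  (hφ.continuousOn.integrableOn_compact hs.isCompact_closure).mono_set subset_closure

theorem isBounded_square2 : Bornology.IsBounded square2 :=
  (Metric.isBounded_Ioo 0 1).prod (Metric.isBounded_Ioo 0 1)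

theorem isBounded_slabNeg : Bornology.IsBounded slabNeg := by
  refine (Metric.isBounded_Icc (-1 : Fin 3 → ℝ) 1).subset fun x ⟨h₀, h₁, h₂⟩ => ?_
  constructor <;> intro i <;> fin_cases i <;> simp <;> linarith [h₀.1, h₀.2, h₁.1, h₁.2, h₂.1, h₂.2]

theorem Function.Periodic.setIntegral_Ioo_comp_add {E : Type*} [NormedAddCommGroup E]
    [NormedSpace ℝ E] {h : ℝ → E} {T : ℝ} (hp : Function.Periodic h T) (hT : 0 ≤ T) (a : ℝ) :
    ∫ x in Ioo 0 T, h (x + a) = ∫ x in Ioo 0 T, h x := by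
  simp only [← integral_Ioc_eq_integral_Ioo, ← intervalIntegral.integral_of_le hT,
    intervalIntegral.integral_comp_add_right h a, zero_add]
  simpa [add_comm] using hp.intervalIntegral_add_eq a 0

theorem setIntegral_square2_comp_add_of_periodic {G : ℝ × ℝ → ℝ} (hG : Continuous G)
    (h₁ : ∀ u v, G (u + 1, v) = G (u, v)) (h₂ : ∀ u v, G (u, v + 1) = G (u, v)) (a b : ℝ) :
    ∫ y in square2, G (y.1 + a, y.2 + b) = ∫ y in square2, G y := by
  have hint : ∀ {F : ℝ → ℝ → ℝ}, Continuous (Function.uncurry F) →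
      Integrable (Function.uncurry F)
        ((volume.restrict (Ioo (0:ℝ) 1)).prod (volume.restrict (Ioo (0:ℝ) 1))) := by
    intro F hF
    rw [Measure.prod_restrict, ← Measure.volume_eq_prod]
    exact hF.integrableOn_of_isBounded isBounded_square2
  have hprod : ∀ {F : ℝ × ℝ → ℝ}, Continuous F →
      ∫ y in square2, F y = ∫ u in Ioo (0:ℝ) 1, ∫ v in Ioo (0:ℝ) 1, F (u, v) := by
    intro F hF
    rw [square2, Measure.volume_eq_prod, setIntegral_prod]
    rw [← Measure.volume_eq_prod]
    exact hF.integrableOn_of_isBounded isBounded_square2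
  calc ∫ y in square2, G (y.1 + a, y.2 + b)
      = ∫ u in Ioo (0:ℝ) 1, ∫ v in Ioo (0:ℝ) 1, G (u + a, v + b) := hprod (by fun_prop)
    _ = ∫ u in Ioo (0:ℝ) 1, ∫ v in Ioo (0:ℝ) 1, G (u + a, v) := by
        congr with u
        exact Function.Periodic.setIntegral_Ioo_comp_add (h := fun v => G (u + a, v))
          (h₂ (u + a)) zero_le_one b
    _ = ∫ v in Ioo (0:ℝ) 1, ∫ u in Ioo (0:ℝ) 1, G (u + a, v) :=
        integral_integral_swap (hint (F := fun u v => G (u + a, v)) (by fun_prop))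
    _ = ∫ v in Ioo (0:ℝ) 1, ∫ u in Ioo (0:ℝ) 1, G (u, v) := by
        congr with v
        exact Function.Periodic.setIntegral_Ioo_comp_add (h := fun u => G (u, v))
          (h₁ · v) zero_le_one a
    _ = ∫ u in Ioo (0:ℝ) 1, ∫ v in Ioo (0:ℝ) 1, G (u, v) :=
        (integral_integral_swap (hint (F := fun u v => G (u, v)) hG)).symm
    _ = ∫ y in square2, G y := (hprod hG).symm

theorem HPeriodic.setIntegral_square2_shear {F : (Fin 3 → ℝ) → ℝ} (hF : Continuous F)
    (hper : HPeriodic F) (a b t : ℝ) :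
    ∫ y in square2, F ![y.1 + a, y.2 + b, t] = ∫ y in square2, F ![y.1, y.2, t] := by
  refine setIntegral_square2_comp_add_of_periodic (G := fun y => F ![y.1, y.2, t])
    (by fun_prop) (fun u v => ?_) (fun u v => ?_) a b
  · convert (hper ![u, v, t]).1 using 2
    ext i; fin_cases i <;> simp
  · convert (hper ![u, v, t]).2 using 2
    ext i; fin_cases i <;> simp

theorem HPeriodic.fderiv_apply {f : (Fin 3 → ℝ) → ℝ} (hper : HPeriodic f) (v : Fin 3 → ℝ) :
    HPeriodic fun x => fderiv ℝ f x v := by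
  have hshift : ∀ c x, (∀ y, f (y + c) = f y) → fderiv ℝ f (x + c) = fderiv ℝ f x :=
    fun c x hc => by rw [← fderiv_comp_add_right, funext hc]
  exact fun x => ⟨congrArg (· v) (hshift _ x fun y => (hper y).1),
    congrArg (· v) (hshift _ x fun y => (hper y).2)⟩

theorem setIntegral_slabNeg {F : (Fin 3 → ℝ) → ℝ} (hF : Continuous F) :
    ∫ x in slabNeg, F x = ∫ t in Ioo (-1:ℝ) 0, ∫ y in square2, F ![y.1, y.2, t] := by
  let e : (Fin 3 → ℝ) ≃ᵐ ℝ × (ℝ × ℝ) :=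
    (MeasurableEquiv.piFinSuccAbove (fun _ => ℝ) 2).trans
      ((MeasurableEquiv.refl ℝ).prodCongr MeasurableEquiv.finTwoArrow)
  have he : MeasurePreserving e :=
    ((MeasurePreserving.id volume).prod (volume_preserving_finTwoArrow ℝ)).comp
      (volume_preserving_piFinSuccAbove (fun _ : Fin 3 => ℝ) 2)
  have he_apply : ∀ x, e x = (x 2, (x 0, x 1)) := fun x => rfl
  have hslab : slabNeg = e ⁻¹' (Ioo (-1) 0 ×ˢ square2) := by
    ext x
    simp only [slabNeg, square2, mem_preimage, he_apply, mem_prod, mem_ofPred_eq]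
    tauto
  let G : ℝ × (ℝ × ℝ) → ℝ := fun z => F ![z.2.1, z.2.2, z.1]
  calc ∫ x in slabNeg, F x = ∫ x in e ⁻¹' (Ioo (-1) 0 ×ˢ square2), G (e x) := by
        rw [hslab]
        congr with x
        show F x = F ![x 0, x 1, x 2]
        congr 1
        ext i; fin_cases i <;> rfl
    _ = ∫ z in Ioo (-1) 0 ×ˢ square2, G z := he.setIntegral_preimage_emb e.measurableEmbedding G _
    _ = ∫ t in Ioo (-1:ℝ) 0, ∫ y in square2, F ![y.1, y.2, t] := by
        rw [Measure.volume_eq_prod, setIntegral_prod]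
        rw [← Measure.volume_eq_prod]
        exact Continuous.integrableOn_of_isBounded (by fun_prop)
          ((Metric.isBounded_Ioo _ _).prod isBounded_square2)

theorem sq_le_integral_of_hasDerivAt {g g' : ℝ → ℝ} {a b : ℝ} (hab : a ≤ b) (hba : b - a ≤ 1)
    (hg : ∀ t, HasDerivAt g (g' t) t) (hg' : Continuous g') :
    (b - a) * g b ^ 2 ≤ ∫ t in a..b, (2 * g t ^ 2 + g' t ^ 2) := by
  have hgc : Continuous g := continuous_iff_continuousAt.2 fun t => (hg t).continuousAt
  have hderiv : ∀ t, HasDerivAt (fun t => (t - a) * g t ^ 2)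
      (g t ^ 2 + (t - a) * (2 * g t * g' t)) t := by
    intro t
    refine (((hasDerivAt_id' t).sub_const a).fun_mul ((hg t).fun_pow 2)).congr_deriv ?_
    push_cast
    ring
  calc (b - a) * g b ^ 2 = ∫ t in a..b, (g t ^ 2 + (t - a) * (2 * g t * g' t)) := by
        rw [intervalIntegral.integral_eq_sub_of_hasDerivAt (fun t _ => hderiv t)
          (Continuous.intervalIntegrable (by fun_prop) _ _)]
        ring
    _ ≤ ∫ t in a..b, (2 * g t ^ 2 + g' t ^ 2) := by
        refine intervalIntegral.integral_mono_on hab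
          (Continuous.intervalIntegrable (by fun_prop) _ _)
          (Continuous.intervalIntegrable (by fun_prop) _ _) fun t ht => ?_
        -- `2 (t - a) g g' ≤ g² + (t - a)² g'²` and `(t - a)² ≤ 1` on `[a, b]`
        have h₀ : 0 ≤ t - a := by linarith [ht.1]
        have h₁ : t - a ≤ 1 := by linarith [ht.2]
        nlinarith [sq_nonneg (g t - (t - a) * g' t), mul_le_one₀ h₁ h₀ h₁, sq_nonneg (g' t)]

theorem hasDerivAt_comp_add_smul {E F : Type*} [NormedAddCommGroup E] [NormedSpace ℝ E]
    [NormedAddCommGroup F] [NormedSpace ℝ F] {f : E → F} (hf : Differentiable ℝ f) (x v : E)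
    (t : ℝ) : HasDerivAt (fun s : ℝ => f (x + s • v)) (fderiv ℝ f (x + t • v) v) t := by
  have hline : HasDerivAt (fun s : ℝ => x + s • v) v t := by
    simpa using ((hasDerivAt_id t).smul_const v).const_add x
  exact (hf _).hasFDerivAt.comp_hasDerivAt t hline

theorem sq_trace_le_setIntegral_slabNeg {f : (Fin 3 → ℝ) → ℝ} (hf : ContDiff ℝ 1 f)
    (hper : HPeriodic f) {v : Fin 3 → ℝ} (hv : v 2 = 1) :
    ∫ y in square2, f ![y.1, y.2, 0] ^ 2 ≤ ∫ x in slabNeg, (2 * f x ^ 2 + fderiv ℝ f x v ^ 2) := by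
  set V : (Fin 3 → ℝ) → ℝ := fun x => 2 * f x ^ 2 + fderiv ℝ f x v ^ 2 with hV
  have hVc : Continuous V := by
    have := hf.continuous_fderiv one_ne_zero
    have := hf.continuous
    fun_prop
  have hVper : HPeriodic V := fun x => by
    simp only [hV, (hper x).1, (hper x).2, (hper.fderiv_apply v x).1, (hper.fderiv_apply v x).2,
      and_self]
  let γ : ℝ × ℝ → ℝ → Fin 3 → ℝ := fun y t => ![y.1, y.2, 0] + t • v
  have hγ : ∀ y t, γ y t = ![y.1 + t * v 0, y.2 + t * v 1, t] := fun y t => by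
    ext i; fin_cases i <;> simp [γ, hv, Matrix.vecHead, Matrix.vecTail]
  have hγc : Continuous fun p : (ℝ × ℝ) × ℝ => V (γ p.1 p.2) := by
    simp only [hγ]; fun_prop
  have hline : ∀ y, f ![y.1, y.2, 0] ^ 2 ≤ ∫ t in Ioo (-1:ℝ) 0, V (γ y t) := fun y => by
    have := sq_le_integral_of_hasDerivAt (a := -1) (b := 0) (by norm_num) (by norm_num)
      (hasDerivAt_comp_add_smul (hf.differentiable one_ne_zero) ![y.1, y.2, 0] v)
      ((hf.continuous_fderiv one_ne_zero).clm_apply continuous_const |>.comp (by fun_prop))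
    simpa [γ, intervalIntegral.integral_of_le, integral_Ioc_eq_integral_Ioo] using this
  have hint : Integrable (Function.uncurry fun y t => V (γ y t))
      ((volume.restrict square2).prod (volume.restrict (Ioo (-1:ℝ) 0))) := by
    rw [Measure.prod_restrict, ← Measure.volume_eq_prod]
    exact hγc.integrableOn_of_isBounded (isBounded_square2.prod (Metric.isBounded_Ioo _ _))
  calc ∫ y in square2, f ![y.1, y.2, 0] ^ 2
      ≤ ∫ y in square2, ∫ t in Ioo (-1:ℝ) 0, V (γ y t) :=
        setIntegral_mono_on ((hf.continuous.comp (by fun_prop)).pow 2 |>.integrableOn_of_isBounded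
          isBounded_square2) hint.integral_prod_left
          (measurableSet_Ioo.prod measurableSet_Ioo) fun y _ => hline y
    _ = ∫ t in Ioo (-1:ℝ) 0, ∫ y in square2, V (γ y t) := integral_integral_swap hint
    _ = ∫ t in Ioo (-1:ℝ) 0, ∫ y in square2, V ![y.1, y.2, t] := by
        congr with t
        simp only [hγ]
        exact hVper.setIntegral_square2_shear hVc _ _ t
    _ = ∫ x in slabNeg, V x := (setIntegral_slabNeg hVc).symm

/-- Poincaré-type trace inequality on the lower slab:
`|f|₀² ≲ B̄₃⁻² ‖(B̄·∇)f‖₀² + ‖f‖₀²` with trace on `Σ = {x₃ = 0}`. -/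
theorem poincare_type_slab_upper_trace :
    ∃ C : ℝ, 0 < C ∧
      ∀ B : Fin 3 → ℝ, B 2 ≠ 0 →
        ∀ f : (Fin 3 → ℝ) → ℝ, ContDiff ℝ 1 f → HPeriodic f →
          (∫ y in square2, (f ![y.1, y.2, (0 : ℝ)]) ^ 2) ≤
            C * (((B 2) ^ 2)⁻¹ * (∫ x in slabNeg, (fderiv ℝ f x B) ^ 2)
              + ∫ x in slabNeg, (f x) ^ 2) := by
  refine ⟨2, two_pos, fun B hB f hf hper => ?_⟩
  have hfc := hf.continuous
  have hDc : Continuous fun x => fderiv ℝ f x B :=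
    (hf.continuous_fderiv one_ne_zero).clm_apply continuous_const
  have hnorm : ∀ x, fderiv ℝ f x ((B 2)⁻¹ • B) ^ 2 = ((B 2) ^ 2)⁻¹ * fderiv ℝ f x B ^ 2 :=
    fun x => by rw [map_smul, smul_eq_mul, mul_pow, inv_pow]
  have hDnonneg : 0 ≤ ((B 2) ^ 2)⁻¹ * ∫ x in slabNeg, fderiv ℝ f x B ^ 2 :=
    mul_nonneg (by positivity) (integral_nonneg fun x => sq_nonneg _)
  calc ∫ y in square2, f ![y.1, y.2, 0] ^ 2
      ≤ ∫ x in slabNeg, (2 * f x ^ 2 + fderiv ℝ f x ((B 2)⁻¹ • B) ^ 2) :=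
        sq_trace_le_setIntegral_slabNeg hf hper (by simp [hB])
    _ = 2 * (∫ x in slabNeg, f x ^ 2) + ((B 2) ^ 2)⁻¹ * ∫ x in slabNeg, fderiv ℝ f x B ^ 2 := by
        simp only [hnorm]
        rw [integral_add (Continuous.integrableOn_of_isBounded (by fun_prop) isBounded_slabNeg)
          (Continuous.integrableOn_of_isBounded (by fun_prop) isBounded_slabNeg),
          integral_const_mul, integral_const_mul]
    _ ≤ _ := by linarith
end

section
/- Anisotropic step of the Hodge-type estimate: for all integers r ≥ 1 and ℓ with 1 ≤ ℓ ≤ r, there exists a constant C > 0 such that for every smooth vector field v : ℝ³ → ℝ³ that is 1-periodic in x₁ and x₂, one has ‖v‖_{ℓ, r−ℓ}² ≤ C ( ‖v‖_{ℓ−1, r−ℓ+1}² + ‖(curl v)_h‖_{r−1}² + ‖div v‖_{r−1}² ), where all Sobolev norms are taken over the slab Ω = 𝕋² × (−1,1). -/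
open MeasureTheory

section AuxLemmas

open Function

lemma pd_contDiff {f : (Fin 3 → ℝ) → ℝ} (hf : ContDiff ℝ (⊤:ℕ∞) f) (i : Fin 3) :
    ContDiff ℝ (⊤:ℕ∞) (pd i f) :=
  (hf.fderiv_right (m := (⊤:ℕ∞)) (by simp)).clm_apply contDiff_const

lemma pd_comm (i j : Fin 3) {f : (Fin 3 → ℝ) → ℝ} (hf : ContDiff ℝ (⊤:ℕ∞) f) :
    pd i (pd j f) = pd j (pd i f) := by
  funext x
  have hd : Differentiable ℝ (fderiv ℝ f) :=
    (hf.fderiv_right (m := (⊤:ℕ∞)) (by simp)).differentiable (by simp)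
  have key : ∀ v w : Fin 3 → ℝ, fderiv ℝ (fun y => fderiv ℝ f y v) x w
      = fderiv ℝ (fderiv ℝ f) x w v := by
    intro v w
    rw [fderiv_clm_apply (hd.differentiableAt) (differentiableAt_const v)]
    simp [ContinuousLinearMap.add_apply, fderiv_const]
  have hsymm := (hf.contDiffAt (x := x)).isSymmSndFDerivAt (by rw [minSmoothness_of_isRCLikeNormedField]; exact WithTop.coe_le_coe.mpr le_top)
  show fderiv ℝ (pd j f) x (Pi.single i 1) = fderiv ℝ (pd i f) x (Pi.single j 1)
  unfold pd
  rw [key, key, hsymm]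

lemma pd_iter_contDiff {f : (Fin 3 → ℝ) → ℝ} (hf : ContDiff ℝ (⊤:ℕ∞) f) (i : Fin 3) :
    ∀ n, ContDiff ℝ (⊤:ℕ∞) ((pd i)^[n] f)
  | 0 => hf
  | n+1 => by
    rw [Function.iterate_succ_apply']
    exact pd_contDiff (pd_iter_contDiff hf i n) i

lemma pd_comm_iter (i j : Fin 3) {f : (Fin 3 → ℝ) → ℝ} (hf : ContDiff ℝ (⊤:ℕ∞) f) :
    ∀ n, pd i ((pd j)^[n] f) = (pd j)^[n] (pd i f)
  | 0 => rfl
  | n+1 => by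
    rw [Function.iterate_succ_apply', pd_comm i j (pd_iter_contDiff hf j n),
      pd_comm_iter i j hf n]
    exact (Function.iterate_succ_apply' (pd j) n (pd i f)).symm

lemma iter_comm (i j : Fin 3) {f : (Fin 3 → ℝ) → ℝ} (hf : ContDiff ℝ (⊤:ℕ∞) f) :
    ∀ m n, (pd i)^[m] ((pd j)^[n] f) = (pd j)^[n] ((pd i)^[m] f)
  | 0, n => rfl
  | m+1, n => by
    rw [Function.iterate_succ_apply, pd_comm_iter i j hf n,
      iter_comm i j (pd_contDiff hf i) m n]
    exact congrArg _ (Function.iterate_succ_apply (pd i) m f).symm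

lemma pdIter_shift {f : (Fin 3 → ℝ) → ℝ} (hf : ContDiff ℝ (⊤:ℕ∞) f) (a b a' b' c : ℕ) :
    pdIter a' b' c ((pd 0)^[a] ((pd 1)^[b] f)) = pdIter (a+a') (b+b') c f := by
  unfold pdIter
  rw [iter_comm 2 0 (pd_iter_contDiff hf 1 b) c a,
    iter_comm 2 1 hf c b,
    iter_comm 1 0 (pd_iter_contDiff (pd_iter_contDiff hf 2 c) 1 b) b' a,
    ← Function.iterate_add_apply (pd 0) a' a, ← Function.iterate_add_apply (pd 1) b' b,
    Nat.add_comm a' a, Nat.add_comm b' b]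

lemma pdIter_pd0 {f : (Fin 3 → ℝ) → ℝ} (hf : ContDiff ℝ (⊤:ℕ∞) f) (a b c : ℕ) :
    pdIter a b c (pd 0 f) = pdIter (a+1) b c f := by
  have h := pdIter_shift hf 1 0 a b c
  simpa [Nat.add_comm] using h

lemma pdIter_pd1 {f : (Fin 3 → ℝ) → ℝ} (hf : ContDiff ℝ (⊤:ℕ∞) f) (a b c : ℕ) :
    pdIter a b c (pd 1 f) = pdIter a (b+1) c f := by
  have h := pdIter_shift hf 0 1 a b c
  simpa [Nat.add_comm] using h

lemma pdIter_succ_c (f : (Fin 3 → ℝ) → ℝ) (a b c : ℕ) :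
    pdIter a b (c+1) f = pdIter a b c (pd 2 f) := by
  unfold pdIter
  rw [Function.iterate_succ_apply]

lemma pd_add {f g : (Fin 3 → ℝ) → ℝ} (hf : ContDiff ℝ (⊤:ℕ∞) f) (hg : ContDiff ℝ (⊤:ℕ∞) g)
    (i : Fin 3) : pd i (fun x => f x + g x) = fun x => pd i f x + pd i g x := by
  funext x
  unfold pd
  rw [fderiv_fun_add ((hf.differentiable (by simp)) x) ((hg.differentiable (by simp)) x)]
  simp

lemma pd_sub {f g : (Fin 3 → ℝ) → ℝ} (hf : ContDiff ℝ (⊤:ℕ∞) f) (hg : ContDiff ℝ (⊤:ℕ∞) g)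
    (i : Fin 3) : pd i (fun x => f x - g x) = fun x => pd i f x - pd i g x := by
  funext x
  unfold pd
  rw [fderiv_fun_sub ((hf.differentiable (by simp)) x) ((hg.differentiable (by simp)) x)]
  simp

lemma pd_iter_add {f g : (Fin 3 → ℝ) → ℝ} (hf : ContDiff ℝ (⊤:ℕ∞) f) (hg : ContDiff ℝ (⊤:ℕ∞) g)
    (i : Fin 3) : ∀ n, (pd i)^[n] (fun x => f x + g x)
      = fun x => (pd i)^[n] f x + (pd i)^[n] g x
  | 0 => rfl
  | n+1 => by
    rw [Function.iterate_succ_apply', pd_iter_add hf hg i n,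
      pd_add (pd_iter_contDiff hf i n) (pd_iter_contDiff hg i n) i]
    funext x
    rw [Function.iterate_succ_apply', Function.iterate_succ_apply']

lemma pd_iter_sub {f g : (Fin 3 → ℝ) → ℝ} (hf : ContDiff ℝ (⊤:ℕ∞) f) (hg : ContDiff ℝ (⊤:ℕ∞) g)
    (i : Fin 3) : ∀ n, (pd i)^[n] (fun x => f x - g x)
      = fun x => (pd i)^[n] f x - (pd i)^[n] g x
  | 0 => rfl
  | n+1 => by
    rw [Function.iterate_succ_apply', pd_iter_sub hf hg i n,
      pd_sub (pd_iter_contDiff hf i n) (pd_iter_contDiff hg i n) i]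
    funext x
    rw [Function.iterate_succ_apply', Function.iterate_succ_apply']

lemma pdIter_add {f g : (Fin 3 → ℝ) → ℝ} (hf : ContDiff ℝ (⊤:ℕ∞) f) (hg : ContDiff ℝ (⊤:ℕ∞) g)
    (a b c : ℕ) : pdIter a b c (fun x => f x + g x)
      = fun x => pdIter a b c f x + pdIter a b c g x := by
  unfold pdIter
  rw [pd_iter_add hf hg 2 c,
    pd_iter_add (pd_iter_contDiff hf 2 c) (pd_iter_contDiff hg 2 c) 1 b,
    pd_iter_add (pd_iter_contDiff (pd_iter_contDiff hf 2 c) 1 b)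
      (pd_iter_contDiff (pd_iter_contDiff hg 2 c) 1 b) 0 a]

lemma pdIter_sub {f g : (Fin 3 → ℝ) → ℝ} (hf : ContDiff ℝ (⊤:ℕ∞) f) (hg : ContDiff ℝ (⊤:ℕ∞) g)
    (a b c : ℕ) : pdIter a b c (fun x => f x - g x)
      = fun x => pdIter a b c f x - pdIter a b c g x := by
  unfold pdIter
  rw [pd_iter_sub hf hg 2 c,
    pd_iter_sub (pd_iter_contDiff hf 2 c) (pd_iter_contDiff hg 2 c) 1 b,
    pd_iter_sub (pd_iter_contDiff (pd_iter_contDiff hf 2 c) 1 b)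
      (pd_iter_contDiff (pd_iter_contDiff hg 2 c) 1 b) 0 a]

lemma pdIter_contDiff {f : (Fin 3 → ℝ) → ℝ} (hf : ContDiff ℝ (⊤:ℕ∞) f) (a b c : ℕ) :
    ContDiff ℝ (⊤:ℕ∞) (pdIter a b c f) :=
  pd_iter_contDiff (pd_iter_contDiff (pd_iter_contDiff hf 2 c) 1 b) 0 a

open MeasureTheory in
lemma if_term_nonneg (k : ℕ) (S : Set (Fin 3 → ℝ)) (f : (Fin 3 → ℝ) → ℝ) (a b c : ℕ) :
    0 ≤ if a + b + c ≤ k then ∫ x in S, (pdIter a b c f x)^2 else 0 := by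
  split
  · exact integral_nonneg fun x => sq_nonneg _
  · exact le_rfl

lemma sobSq_nonneg (k : ℕ) (S : Set (Fin 3 → ℝ)) (f : (Fin 3 → ℝ) → ℝ) : 0 ≤ sobSq k S f :=
  Finset.sum_nonneg fun a _ => Finset.sum_nonneg fun b _ => Finset.sum_nonneg fun c _ =>
    if_term_nonneg k S f a b c

open MeasureTheory in
lemma le_sobSq {k a b c : ℕ} (h : a + b + c ≤ k) (S : Set (Fin 3 → ℝ)) (f : (Fin 3 → ℝ) → ℝ) :
    (∫ x in S, (pdIter a b c f x)^2) ≤ sobSq k S f := by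
  have h3 : (∫ x in S, (pdIter a b c f x)^2)
      ≤ ∑ c' ∈ Finset.range (k+1),
        if a + b + c' ≤ k then ∫ x in S, (pdIter a b c' f x)^2 else 0 := by
    have := Finset.single_le_sum
      (f := fun c' => if a + b + c' ≤ k then ∫ x in S, (pdIter a b c' f x)^2 else 0)
      (fun i _ => if_term_nonneg k S f a b i)
      (Finset.mem_range.mpr (by omega : c < k + 1))
    simpa [if_pos h] using this
  have h2 : (∑ c' ∈ Finset.range (k+1),
        if a + b + c' ≤ k then ∫ x in S, (pdIter a b c' f x)^2 else 0)
      ≤ ∑ b' ∈ Finset.range (k+1), ∑ c' ∈ Finset.range (k+1),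
        if a + b' + c' ≤ k then ∫ x in S, (pdIter a b' c' f x)^2 else 0 :=
    Finset.single_le_sum
      (f := fun b' => ∑ c' ∈ Finset.range (k+1),
        if a + b' + c' ≤ k then ∫ x in S, (pdIter a b' c' f x)^2 else 0)
      (fun i _ => Finset.sum_nonneg fun c' _ => if_term_nonneg k S f a i c')
      (Finset.mem_range.mpr (by omega : b < k + 1))
  have h1 : (∑ b' ∈ Finset.range (k+1), ∑ c' ∈ Finset.range (k+1),
        if a + b' + c' ≤ k then ∫ x in S, (pdIter a b' c' f x)^2 else 0)
      ≤ sobSq k S f :=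
    Finset.single_le_sum
      (f := fun a' => ∑ b' ∈ Finset.range (k+1), ∑ c' ∈ Finset.range (k+1),
        if a' + b' + c' ≤ k then ∫ x in S, (pdIter a' b' c' f x)^2 else 0)
      (fun i _ => Finset.sum_nonneg fun b' _ => Finset.sum_nonneg fun c' _ =>
        if_term_nonneg k S f i b' c')
      (Finset.mem_range.mpr (by omega : a < k + 1))
  exact h3.trans (h2.trans h1)

lemma aniso_term_nonneg (m L : ℕ) (S : Set (Fin 3 → ℝ)) (f : (Fin 3 → ℝ) → ℝ) (a b : ℕ) :
    0 ≤ if a + b ≤ L then sobSq m S ((pd 0)^[a] ((pd 1)^[b] f)) else 0 := by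
  split
  · exact sobSq_nonneg _ _ _
  · exact le_rfl

lemma sobAnisoSq_nonneg (m L : ℕ) (S : Set (Fin 3 → ℝ)) (f : (Fin 3 → ℝ) → ℝ) :
    0 ≤ sobAnisoSq m L S f :=
  Finset.sum_nonneg fun a _ => Finset.sum_nonneg fun b _ => aniso_term_nonneg m L S f a b

lemma le_sobAnisoSq {m L a b : ℕ} (h : a + b ≤ L) (S : Set (Fin 3 → ℝ)) (f : (Fin 3 → ℝ) → ℝ) :
    sobSq m S ((pd 0)^[a] ((pd 1)^[b] f)) ≤ sobAnisoSq m L S f := by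
  have h2 : sobSq m S ((pd 0)^[a] ((pd 1)^[b] f))
      ≤ ∑ b' ∈ Finset.range (L+1),
        if a + b' ≤ L then sobSq m S ((pd 0)^[a] ((pd 1)^[b'] f)) else 0 := by
    have := Finset.single_le_sum
      (f := fun b' => if a + b' ≤ L then sobSq m S ((pd 0)^[a] ((pd 1)^[b'] f)) else 0)
      (fun i _ => aniso_term_nonneg m L S f a i)
      (Finset.mem_range.mpr (by omega : b < L + 1))
    simpa [if_pos h] using this
  have h1 : (∑ b' ∈ Finset.range (L+1),
        if a + b' ≤ L then sobSq m S ((pd 0)^[a] ((pd 1)^[b'] f)) else 0)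
      ≤ sobAnisoSq m L S f :=
    Finset.single_le_sum
      (f := fun a' => ∑ b' ∈ Finset.range (L+1),
        if a' + b' ≤ L then sobSq m S ((pd 0)^[a'] ((pd 1)^[b'] f)) else 0)
      (fun i _ => Finset.sum_nonneg fun b' _ => aniso_term_nonneg m L S f i b')
      (Finset.mem_range.mpr (by omega : a < L + 1))
  exact h2.trans h1

lemma sobAnisoSqVec_nonneg (m L : ℕ) (S : Set (Fin 3 → ℝ)) (v : (Fin 3 → ℝ) → Fin 3 → ℝ) :
    0 ≤ sobAnisoSqVec m L S v :=
  Finset.sum_nonneg fun i _ => sobAnisoSq_nonneg m L S _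

lemma le_sobAnisoSqVec (m L : ℕ) (S : Set (Fin 3 → ℝ)) (v : (Fin 3 → ℝ) → Fin 3 → ℝ)
    (i : Fin 3) : sobAnisoSq m L S (fun x => v x i) ≤ sobAnisoSqVec m L S v :=
  Finset.single_le_sum (f := fun j => sobAnisoSq m L S (fun x => v x j))
    (fun j _ => sobAnisoSq_nonneg m L S _) (Finset.mem_univ i)

open MeasureTheory in
lemma term_le_anisoVec {m L A B c : ℕ} (hc : c ≤ m) (hABc : A + B + c ≤ m + L)
    {v : (Fin 3 → ℝ) → Fin 3 → ℝ} (hv : ContDiff ℝ (⊤:ℕ∞) v) (i : Fin 3)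
    (S : Set (Fin 3 → ℝ)) :
    (∫ x in S, (pdIter A B c (fun x => v x i) x)^2) ≤ sobAnisoSqVec m L S v := by
  have hf : ContDiff ℝ (⊤:ℕ∞) (fun x => v x i) := contDiff_pi.mp hv i
  set a' := min A (m - c) with ha'
  set b' := min B (m - c - a') with hb'
  have key : pdIter a' b' c ((pd 0)^[A - a'] ((pd 1)^[B - b'] (fun x => v x i)))
      = pdIter A B c (fun x => v x i) := by
    rw [pdIter_shift hf]
    have h1 : A - a' + a' = A := by omega
    have h2 : B - b' + b' = B := by omega
    rw [h1, h2]
  calc (∫ x in S, (pdIter A B c (fun x => v x i) x)^2)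
      = ∫ x in S, (pdIter a' b' c ((pd 0)^[A - a'] ((pd 1)^[B - b'] (fun x => v x i))) x)^2 := by
        rw [key]
    _ ≤ sobSq m S ((pd 0)^[A - a'] ((pd 1)^[B - b'] (fun x => v x i))) :=
        le_sobSq (by omega) _ _
    _ ≤ sobAnisoSq m L S (fun x => v x i) := le_sobAnisoSq (by omega) _ _
    _ ≤ sobAnisoSqVec m L S v := le_sobAnisoSqVec m L S v i

open MeasureTheory in
lemma integrableOn_slab {f : (Fin 3 → ℝ) → ℝ} (hf : Continuous f) :
    IntegrableOn f slabFull := by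
  have hsub : slabFull ⊆ Set.Icc (fun _ => (-1:ℝ)) (fun _ => 1) := by
    intro x hx
    obtain ⟨h0, h1, h2⟩ := hx
    constructor
    · intro i; fin_cases i
      · exact (show (-1:ℝ) ≤ x 0 by linarith [h0.1])
      · exact (show (-1:ℝ) ≤ x 1 by linarith [h1.1])
      · exact (show (-1:ℝ) ≤ x 2 by linarith [h2.1])
    · intro i; fin_cases i
      · exact (show x 0 ≤ (1:ℝ) by linarith [h0.2])
      · exact (show x 1 ≤ (1:ℝ) by linarith [h1.2])
      · exact (show x 2 ≤ (1:ℝ) by linarith [h2.2])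
  exact (hf.integrableOn_Icc).mono_set hsub

open MeasureTheory in
lemma integral_sq_add_le {f g : (Fin 3 → ℝ) → ℝ} (hf : Continuous f) (hg : Continuous g) :
    (∫ x in slabFull, (f x + g x)^2)
      ≤ 2 * (∫ x in slabFull, (f x)^2) + 2 * (∫ x in slabFull, (g x)^2) := by
  have h1 : IntegrableOn (fun x => (f x + g x)^2) slabFull :=
    integrableOn_slab (by continuity)
  have hf2 : IntegrableOn (fun x => (f x)^2) slabFull := integrableOn_slab (by continuity)
  have hg2 : IntegrableOn (fun x => (g x)^2) slabFull := integrableOn_slab (by continuity)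
  have h2 : IntegrableOn (fun x => 2 * (f x)^2 + 2 * (g x)^2) slabFull :=
    (hf2.const_mul 2).add (hg2.const_mul 2)
  calc (∫ x in slabFull, (f x + g x)^2)
      ≤ ∫ x in slabFull, (2 * (f x)^2 + 2 * (g x)^2) :=
        integral_mono h1 h2 (fun x => by nlinarith [sq_nonneg (f x - g x)])
    _ = 2 * (∫ x in slabFull, (f x)^2) + 2 * (∫ x in slabFull, (g x)^2) := by
        rw [integral_add (hf2.const_mul 2) (hg2.const_mul 2), integral_const_mul, integral_const_mul]

open MeasureTheory in
lemma integral_sq_sub_le {f g : (Fin 3 → ℝ) → ℝ} (hf : Continuous f) (hg : Continuous g) :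
    (∫ x in slabFull, (f x - g x)^2)
      ≤ 2 * (∫ x in slabFull, (f x)^2) + 2 * (∫ x in slabFull, (g x)^2) := by
  have h1 : IntegrableOn (fun x => (f x - g x)^2) slabFull :=
    integrableOn_slab (by continuity)
  have hf2 : IntegrableOn (fun x => (f x)^2) slabFull := integrableOn_slab (by continuity)
  have hg2 : IntegrableOn (fun x => (g x)^2) slabFull := integrableOn_slab (by continuity)
  have h2 : IntegrableOn (fun x => 2 * (f x)^2 + 2 * (g x)^2) slabFull :=
    (hf2.const_mul 2).add (hg2.const_mul 2)
  calc (∫ x in slabFull, (f x - g x)^2)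
      ≤ ∫ x in slabFull, (2 * (f x)^2 + 2 * (g x)^2) :=
        integral_mono h1 h2 (fun x => by nlinarith [sq_nonneg (f x + g x)])
    _ = 2 * (∫ x in slabFull, (f x)^2) + 2 * (∫ x in slabFull, (g x)^2) := by
        rw [integral_add (hf2.const_mul 2) (hg2.const_mul 2), integral_const_mul, integral_const_mul]

open MeasureTheory in
lemma integral_sq_sub_sub_le {f g h : (Fin 3 → ℝ) → ℝ} (hf : Continuous f) (hg : Continuous g)
    (hh : Continuous h) :
    (∫ x in slabFull, (f x - g x - h x)^2)
      ≤ 3 * (∫ x in slabFull, (f x)^2) + 3 * (∫ x in slabFull, (g x)^2)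
        + 3 * (∫ x in slabFull, (h x)^2) := by
  have h1 : IntegrableOn (fun x => (f x - g x - h x)^2) slabFull :=
    integrableOn_slab (by continuity)
  have hf2 : IntegrableOn (fun x => (f x)^2) slabFull := integrableOn_slab (by continuity)
  have hg2 : IntegrableOn (fun x => (g x)^2) slabFull := integrableOn_slab (by continuity)
  have hh2 : IntegrableOn (fun x => (h x)^2) slabFull := integrableOn_slab (by continuity)
  have h2 : IntegrableOn (fun x => 3 * (f x)^2 + 3 * (g x)^2 + 3 * (h x)^2) slabFull :=
    ((hf2.const_mul 3).add (hg2.const_mul 3)).add (hh2.const_mul 3)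
  calc (∫ x in slabFull, (f x - g x - h x)^2)
      ≤ ∫ x in slabFull, (3 * (f x)^2 + 3 * (g x)^2 + 3 * (h x)^2) :=
        integral_mono h1 h2 (fun x => by
          nlinarith [sq_nonneg (f x + g x), sq_nonneg (f x + h x), sq_nonneg (g x - h x)])
    _ = 3 * (∫ x in slabFull, (f x)^2) + 3 * (∫ x in slabFull, (g x)^2)
        + 3 * (∫ x in slabFull, (h x)^2) := by
        have hfg : IntegrableOn (fun x => 3 * (f x)^2 + 3 * (g x)^2) slabFull :=
          (hf2.const_mul 3).add (hg2.const_mul 3)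
        rw [integral_add hfg (hh2.const_mul 3),
          integral_add (hf2.const_mul 3) (hg2.const_mul 3), integral_const_mul,
          integral_const_mul, integral_const_mul]

end AuxLemmas

lemma pdIter_sub3 {f g h : (Fin 3 → ℝ) → ℝ} (hf : ContDiff ℝ (⊤:ℕ∞) f)
    (hg : ContDiff ℝ (⊤:ℕ∞) g) (hh : ContDiff ℝ (⊤:ℕ∞) h) (a b c : ℕ) :
    pdIter a b c (fun x => f x - g x - h x)
      = fun x => pdIter a b c f x - pdIter a b c g x - pdIter a b c h x := by
  have e3 := pdIter_sub hf hg a b c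
  calc pdIter a b c (fun x => f x - g x - h x)
      = fun x => pdIter a b c (fun x => f x - g x) x - pdIter a b c h x :=
        pdIter_sub (hf.sub hg) hh a b c
    _ = fun x => pdIter a b c f x - pdIter a b c g x - pdIter a b c h x := by rw [e3]

/-- Anisotropic step of the Hodge-type estimate on `Ω = 𝕋² × (-1,1)`:
`‖v‖_{ℓ,r-ℓ}² ≲ ‖v‖_{ℓ-1,r-ℓ+1}² + ‖(curl v)_h‖_{r-1}² + ‖div v‖_{r-1}²`. -/
theorem hodge_type_estimate_aniso_step (r ℓ : ℕ) (hr : 1 ≤ r) (hl1 : 1 ≤ ℓ) (hlr : ℓ ≤ r) :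
    ∃ C : ℝ, 0 < C ∧
      ∀ v : (Fin 3 → ℝ) → Fin 3 → ℝ, ContDiff ℝ (⊤ : ℕ∞) v →
        (∀ i, HPeriodic fun x => v x i) →
        sobAnisoSqVec ℓ (r - ℓ) slabFull v ≤
          C * (sobAnisoSqVec (ℓ - 1) (r - ℓ + 1) slabFull v
            + sobSq (r - 1) slabFull (fun x => curl v x 0)
            + sobSq (r - 1) slabFull (fun x => curl v x 1)
            + sobSq (r - 1) slabFull (divg v)) := by
  
  have h1 : (0:ℝ) < ((r - ℓ + 1 : ℕ) : ℝ) := by exact_mod_cast Nat.succ_pos _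
  have h2 : (0:ℝ) < ((ℓ + 1 : ℕ) : ℝ) := by exact_mod_cast Nat.succ_pos _
  refine ⟨30 * ((r - ℓ + 1 : ℕ) : ℝ)^2 * ((ℓ + 1 : ℕ) : ℝ)^3,
    mul_pos (mul_pos (by norm_num) (pow_pos h1 2)) (pow_pos h2 3), ?_⟩
  intro v hv _hper
  have hfi : ∀ i : Fin 3, ContDiff ℝ (⊤:ℕ∞) (fun x => v x i) := fun i => contDiff_pi.mp hv i
  have hcurl0eq : (fun x => curl v x 0)
      = fun x => pd 1 (fun y => v y 2) x - pd 2 (fun y => v y 1) x := by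
    funext x; simp [curl]
  have hcurl1eq : (fun x => curl v x 1)
      = fun x => pd 2 (fun y => v y 0) x - pd 0 (fun y => v y 2) x := by
    funext x; simp [curl]
  have hcurl0 : ContDiff ℝ (⊤:ℕ∞) (fun x => curl v x 0) := by
    rw [hcurl0eq]; exact (pd_contDiff (hfi 2) 1).sub (pd_contDiff (hfi 1) 2)
  have hcurl1 : ContDiff ℝ (⊤:ℕ∞) (fun x => curl v x 1) := by
    rw [hcurl1eq]; exact (pd_contDiff (hfi 0) 2).sub (pd_contDiff (hfi 2) 0)
  have hdivg : ContDiff ℝ (⊤:ℕ∞) (divg v) :=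
    ((pd_contDiff (hfi 0) 0).add (pd_contDiff (hfi 1) 1)).add (pd_contDiff (hfi 2) 2)
  have hA0 : 0 ≤ sobAnisoSqVec (ℓ-1) (r-ℓ+1) slabFull v := sobAnisoSqVec_nonneg _ _ _ _
  have hC00 : 0 ≤ sobSq (r-1) slabFull (fun x => curl v x 0) := sobSq_nonneg _ _ _
  have hC10 : 0 ≤ sobSq (r-1) slabFull (fun x => curl v x 1) := sobSq_nonneg _ _ _
  have hD0 : 0 ≤ sobSq (r-1) slabFull (divg v) := sobSq_nonneg _ _ _
  set R := sobAnisoSqVec (ℓ-1) (r-ℓ+1) slabFull v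
    + sobSq (r-1) slabFull (fun x => curl v x 0)
    + sobSq (r-1) slabFull (fun x => curl v x 1)
    + sobSq (r-1) slabFull (divg v) with hR
  have hR0 : 0 ≤ R := by rw [hR]; linarith
  -- the key bound for terms with exactly ℓ vertical derivatives
  have key2 : ∀ (A B : ℕ), A + B ≤ r - ℓ → ∀ i : Fin 3,
      (∫ x in slabFull, (pdIter A B (ℓ-1) (pd 2 (fun x => v x i)) x)^2) ≤ 10 * R := by
    intro A B hAB i
    have hord : A + B + (ℓ-1) ≤ r - 1 := by omega
    fin_cases i
    · -- i = 0
      show (∫ x in slabFull, (pdIter A B (ℓ-1) (pd 2 (fun x => v x 0)) x)^2) ≤ 10 * R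
      have hrw : pd 2 (fun x => v x 0)
          = fun x => curl v x 1 + pd 0 (fun y => v y 2) x := by
        funext x
        simp only [curl, Matrix.cons_val_one, Matrix.head_cons, Matrix.cons_val_zero]
        ring
      have e1 : pdIter A B (ℓ-1) (pd 2 (fun x => v x 0))
          = fun x => pdIter A B (ℓ-1) (fun y => curl v y 1) x
            + pdIter A B (ℓ-1) (pd 0 (fun y => v y 2)) x := by
        rw [hrw]; exact pdIter_add hcurl1 (pd_contDiff (hfi 2) 0) A B (ℓ-1)
      have hP1 : (∫ x in slabFull, (pdIter A B (ℓ-1) (fun y => curl v y 1) x)^2)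
          ≤ sobSq (r-1) slabFull (fun x => curl v x 1) := le_sobSq hord slabFull _
      have hP2 : (∫ x in slabFull, (pdIter A B (ℓ-1) (pd 0 (fun y => v y 2)) x)^2)
          ≤ sobAnisoSqVec (ℓ-1) (r-ℓ+1) slabFull v := by
        rw [pdIter_pd0 (hfi 2) A B (ℓ-1)]
        exact term_le_anisoVec le_rfl (by omega) hv 2 slabFull
      calc (∫ x in slabFull, (pdIter A B (ℓ-1) (pd 2 (fun x => v x 0)) x)^2)
          = ∫ x in slabFull, (pdIter A B (ℓ-1) (fun y => curl v y 1) x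
              + pdIter A B (ℓ-1) (pd 0 (fun y => v y 2)) x)^2 := by rw [e1]
        _ ≤ 2 * (∫ x in slabFull, (pdIter A B (ℓ-1) (fun y => curl v y 1) x)^2)
            + 2 * (∫ x in slabFull, (pdIter A B (ℓ-1) (pd 0 (fun y => v y 2)) x)^2) :=
            integral_sq_add_le (pdIter_contDiff hcurl1 A B (ℓ-1)).continuous
              (pdIter_contDiff (pd_contDiff (hfi 2) 0) A B (ℓ-1)).continuous
        _ ≤ 10 * R := by rw [hR]; linarith
    · -- i = 1
      show (∫ x in slabFull, (pdIter A B (ℓ-1) (pd 2 (fun x => v x 1)) x)^2) ≤ 10 * R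
      have hrw : pd 2 (fun x => v x 1)
          = fun x => pd 1 (fun y => v y 2) x - curl v x 0 := by
        funext x
        simp only [curl, Matrix.cons_val_zero]
        ring
      have e1 : pdIter A B (ℓ-1) (pd 2 (fun x => v x 1))
          = fun x => pdIter A B (ℓ-1) (pd 1 (fun y => v y 2)) x
            - pdIter A B (ℓ-1) (fun y => curl v y 0) x := by
        rw [hrw]; exact pdIter_sub (pd_contDiff (hfi 2) 1) hcurl0 A B (ℓ-1)
      have hP1 : (∫ x in slabFull, (pdIter A B (ℓ-1) (fun y => curl v y 0) x)^2)
          ≤ sobSq (r-1) slabFull (fun x => curl v x 0) := le_sobSq hord slabFull _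
      have hP2 : (∫ x in slabFull, (pdIter A B (ℓ-1) (pd 1 (fun y => v y 2)) x)^2)
          ≤ sobAnisoSqVec (ℓ-1) (r-ℓ+1) slabFull v := by
        rw [pdIter_pd1 (hfi 2) A B (ℓ-1)]
        exact term_le_anisoVec le_rfl (by omega) hv 2 slabFull
      calc (∫ x in slabFull, (pdIter A B (ℓ-1) (pd 2 (fun x => v x 1)) x)^2)
          = ∫ x in slabFull, (pdIter A B (ℓ-1) (pd 1 (fun y => v y 2)) x
              - pdIter A B (ℓ-1) (fun y => curl v y 0) x)^2 := by rw [e1]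
        _ ≤ 2 * (∫ x in slabFull, (pdIter A B (ℓ-1) (pd 1 (fun y => v y 2)) x)^2)
            + 2 * (∫ x in slabFull, (pdIter A B (ℓ-1) (fun y => curl v y 0) x)^2) :=
            integral_sq_sub_le (pdIter_contDiff (pd_contDiff (hfi 2) 1) A B (ℓ-1)).continuous
              (pdIter_contDiff hcurl0 A B (ℓ-1)).continuous
        _ ≤ 10 * R := by rw [hR]; linarith
    · -- i = 2
      show (∫ x in slabFull, (pdIter A B (ℓ-1) (pd 2 (fun x => v x 2)) x)^2) ≤ 10 * R
      have hrw : pd 2 (fun x => v x 2)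
          = fun x => divg v x - pd 0 (fun y => v y 0) x - pd 1 (fun y => v y 1) x := by
        funext x
        simp only [divg]
        ring
      have e1 : pdIter A B (ℓ-1) (pd 2 (fun x => v x 2))
          = fun x => pdIter A B (ℓ-1) (divg v) x
            - pdIter A B (ℓ-1) (pd 0 (fun y => v y 0)) x
            - pdIter A B (ℓ-1) (pd 1 (fun y => v y 1)) x := by
        rw [hrw]
        exact pdIter_sub3 hdivg (pd_contDiff (hfi 0) 0) (pd_contDiff (hfi 1) 1) A B (ℓ-1)
      have hP1 : (∫ x in slabFull, (pdIter A B (ℓ-1) (divg v) x)^2)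
          ≤ sobSq (r-1) slabFull (divg v) := le_sobSq hord slabFull _
      have hP2 : (∫ x in slabFull, (pdIter A B (ℓ-1) (pd 0 (fun y => v y 0)) x)^2)
          ≤ sobAnisoSqVec (ℓ-1) (r-ℓ+1) slabFull v := by
        rw [pdIter_pd0 (hfi 0) A B (ℓ-1)]
        exact term_le_anisoVec le_rfl (by omega) hv 0 slabFull
      have hP3 : (∫ x in slabFull, (pdIter A B (ℓ-1) (pd 1 (fun y => v y 1)) x)^2)
          ≤ sobAnisoSqVec (ℓ-1) (r-ℓ+1) slabFull v := by
        rw [pdIter_pd1 (hfi 1) A B (ℓ-1)]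
        exact term_le_anisoVec le_rfl (by omega) hv 1 slabFull
      calc (∫ x in slabFull, (pdIter A B (ℓ-1) (pd 2 (fun x => v x 2)) x)^2)
          = ∫ x in slabFull, (pdIter A B (ℓ-1) (divg v) x
              - pdIter A B (ℓ-1) (pd 0 (fun y => v y 0)) x
              - pdIter A B (ℓ-1) (pd 1 (fun y => v y 1)) x)^2 := by rw [e1]
        _ ≤ 3 * (∫ x in slabFull, (pdIter A B (ℓ-1) (divg v) x)^2)
            + 3 * (∫ x in slabFull, (pdIter A B (ℓ-1) (pd 0 (fun y => v y 0)) x)^2)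
            + 3 * (∫ x in slabFull, (pdIter A B (ℓ-1) (pd 1 (fun y => v y 1)) x)^2) :=
            integral_sq_sub_sub_le (pdIter_contDiff hdivg A B (ℓ-1)).continuous
              (pdIter_contDiff (pd_contDiff (hfi 0) 0) A B (ℓ-1)).continuous
              (pdIter_contDiff (pd_contDiff (hfi 1) 1) A B (ℓ-1)).continuous
        _ ≤ 10 * R := by rw [hR]; linarith
  have term10 : ∀ (i : Fin 3) (a b a' b' c : ℕ), a + b ≤ r - ℓ → a' + b' + c ≤ ℓ →
      (∫ x in slabFull, (pdIter a' b' c ((pd 0)^[a] ((pd 1)^[b] (fun x => v x i))) x)^2)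
        ≤ 10 * R := by
    intro i a b a' b' c hab habc
    rw [pdIter_shift (hfi i)]
    by_cases hc : c ≤ ℓ - 1
    · have h := term_le_anisoVec (m := ℓ-1) (L := r-ℓ+1) (A := a+a') (B := b+b') (c := c)
        hc (by omega) hv i slabFull
      rw [hR]; linarith
    · have hcc : c = (ℓ - 1) + 1 := by omega
      have hAB : (a + a') + (b + b') ≤ r - ℓ := by omega
      rw [hcc, pdIter_succ_c]
      exact key2 (a+a') (b+b') hAB i
  have hM0 : 0 ≤ 10 * R := by linarith
  have step1 : ∀ (i : Fin 3) (a b : ℕ), a + b ≤ r - ℓ →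
      sobSq ℓ slabFull ((pd 0)^[a] ((pd 1)^[b] (fun x => v x i)))
        ≤ ((ℓ+1 : ℕ) : ℝ)^3 * (10 * R) := by
    intro i a b hab
    unfold sobSq
    calc (∑ a' ∈ Finset.range (ℓ+1), ∑ b' ∈ Finset.range (ℓ+1), ∑ c ∈ Finset.range (ℓ+1),
          if a' + b' + c ≤ ℓ then
            ∫ x in slabFull, (pdIter a' b' c ((pd 0)^[a] ((pd 1)^[b] (fun x => v x i))) x)^2
          else 0)
        ≤ ∑ _a' ∈ Finset.range (ℓ+1), ∑ _b' ∈ Finset.range (ℓ+1), ∑ _c ∈ Finset.range (ℓ+1),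
            10 * R := by
          refine Finset.sum_le_sum fun a' _ => Finset.sum_le_sum fun b' _ =>
            Finset.sum_le_sum fun c _ => ?_
          split
          · exact term10 i a b a' b' c hab ‹_›
          · exact hM0
      _ = ((ℓ+1 : ℕ) : ℝ)^3 * (10 * R) := by
          simp [Finset.sum_const, Finset.card_range, nsmul_eq_mul]
          push_cast
          ring
  have hK0 : 0 ≤ ((ℓ+1 : ℕ) : ℝ)^3 * (10 * R) := mul_nonneg (by positivity) hM0
  have step2 : ∀ i : Fin 3, sobAnisoSq ℓ (r-ℓ) slabFull (fun x => v x i)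
      ≤ ((r-ℓ+1 : ℕ) : ℝ)^2 * (((ℓ+1 : ℕ) : ℝ)^3 * (10 * R)) := by
    intro i
    unfold sobAnisoSq
    calc (∑ a ∈ Finset.range (r-ℓ+1), ∑ b ∈ Finset.range (r-ℓ+1),
          if a + b ≤ r-ℓ then sobSq ℓ slabFull ((pd 0)^[a] ((pd 1)^[b] (fun x => v x i)))
          else 0)
        ≤ ∑ _a ∈ Finset.range (r-ℓ+1), ∑ _b ∈ Finset.range (r-ℓ+1),
            (((ℓ+1 : ℕ) : ℝ)^3 * (10 * R)) := by
          refine Finset.sum_le_sum fun a _ => Finset.sum_le_sum fun b _ => ?_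
          split
          · exact step1 i a b ‹_›
          · exact hK0
      _ = ((r-ℓ+1 : ℕ) : ℝ)^2 * (((ℓ+1 : ℕ) : ℝ)^3 * (10 * R)) := by
          simp [Finset.sum_const, Finset.card_range, nsmul_eq_mul]
          push_cast
          ring
  calc sobAnisoSqVec ℓ (r-ℓ) slabFull v
      = ∑ i : Fin 3, sobAnisoSq ℓ (r-ℓ) slabFull (fun x => v x i) := rfl
    _ ≤ ∑ _i : Fin 3, ((r-ℓ+1 : ℕ) : ℝ)^2 * (((ℓ+1 : ℕ) : ℝ)^3 * (10 * R)) :=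
        Finset.sum_le_sum fun i _ => step2 i
    _ = 30 * ((r - ℓ + 1 : ℕ) : ℝ)^2 * ((ℓ + 1 : ℕ) : ℝ)^3 * R := by
        simp [Finset.sum_const, Finset.card_univ]
        ring
end

section
/- Fractional Sobolev product estimate on the torus 𝕋^d, Fourier-series formulation, high–low case: for every integer d ≥ 1 and all real numbers r, s₁, s₂ with 0 ≤ r ≤ s₁ ≤ s₂ and s₁ > d/2, there exists a constant C > 0 such that for all finitely supported functions f, g : ℤ^d → ℂ, one has ( Σ_{ξ∈ℤ^d} (1+|ξ|²)^r | Σ_{η∈ℤ^d} f(η) g(ξ−η) |² )^{1/2} ≤ C ( Σ_{ξ∈ℤ^d} (1+|ξ|²)^{s₁} |f(ξ)|² )^{1/2} ( Σ_{ξ∈ℤ^d} (1+|ξ|²)^{s₂} |g(ξ)|² )^{1/2}. (This is the estimate ‖fg‖_{H^r(𝕋^d)} ≲ ‖f‖_{H^{s₁}(𝕋^d)} ‖g‖_{H^{s₂}(𝕋^d)} expressed through Fourier coefficients, products of functions corresponding to convolution of their coefficient sequences.) -/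
/-!
Write `⟨ξ⟩² = 1 + |ξ|²`. Since `2 s₁ > d`, the series `∑ ⟨ξ⟩^(-2 s₁)` converges, so by
Cauchy–Schwarz the `H^{s₁}` norm dominates the `ℓ¹` norm of the coefficients. Peetre's inequality
`⟨ξ⟩^{s₁} ≲ ⟨η⟩^{s₁} + ⟨ξ - η⟩^{s₁}` bounds `⟨ξ⟩^{s₁} |(f ∗ g)(ξ)|` by
`(⟨·⟩^{s₁}|f|) ∗ |g| + |f| ∗ (⟨·⟩^{s₁}|g|)`, and Young's inequality `ℓ² ∗ ℓ¹ ⊆ ℓ²` bounds each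
term by `‖f‖_{H^{s₁}} ‖g‖_{H^{s₁}}`. Finally `r ≤ s₁ ≤ s₂` only weakens the estimate.
-/

section WeightedConvolution

variable {ι : Type*}

theorem sq_sum_le_tsum_inv_mul_tsum {ω u : ι → ℝ} (A : Finset ι) (hω : ∀ ξ, 0 < ω ξ)
    (hsum : Summable fun ξ => (ω ξ)⁻¹) (hu : ∀ ξ ∉ A, u ξ = 0) :
    (∑ ξ ∈ A, u ξ) ^ 2 ≤ (∑' ξ, (ω ξ)⁻¹) * ∑' ξ, ω ξ * u ξ ^ 2 := by
  rw [tsum_eq_sum (s := A) (f := fun ξ => ω ξ * u ξ ^ 2) fun ξ hξ => by simp [hu ξ hξ]]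
  calc (∑ ξ ∈ A, u ξ) ^ 2 ≤ (∑ ξ ∈ A, (ω ξ)⁻¹) * ∑ ξ ∈ A, ω ξ * u ξ ^ 2 :=
        Finset.sum_sq_le_sum_mul_sum_of_sq_le_mul A (fun ξ _ => (inv_pos.2 (hω ξ)).le)
          (fun ξ _ => mul_nonneg (hω ξ).le (sq_nonneg _))
          fun ξ _ => by rw [inv_mul_cancel_left₀ (hω ξ).ne']
    _ ≤ (∑' ξ, (ω ξ)⁻¹) * ∑ ξ ∈ A, ω ξ * u ξ ^ 2 := by
        gcongr
        · exact Finset.sum_nonneg fun ξ _ => mul_nonneg (hω ξ).le (sq_nonneg _)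
        · exact hsum.sum_le_tsum A fun ξ _ => (inv_pos.2 (hω ξ)).le

variable [AddCommGroup ι]

theorem sum_mul_sub_comm {R : Type*} [CommSemiring R] [TopologicalSpace R]
    {a b : ι → R} {A B : Finset ι} (ha : ∀ η ∉ A, a η = 0) (hb : ∀ η ∉ B, b η = 0) (ξ : ι) :
    ∑ η ∈ A, a η * b (ξ - η) = ∑ η ∈ B, b η * a (ξ - η) := by
  calc ∑ η ∈ A, a η * b (ξ - η) = ∑' η, a η * b (ξ - η) :=
        (tsum_eq_sum fun η hη => by rw [ha η hη, zero_mul]).symm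
    _ = ∑' η, b η * a (ξ - η) := by
        rw [← (Equiv.subLeft ξ).tsum_eq]
        simp [mul_comm]
    _ = ∑ η ∈ B, b η * a (ξ - η) := tsum_eq_sum fun η hη => by rw [hb η hη, zero_mul]

theorem summable_sq_sum_mul_sub {a b : ι → ℝ} (A : Finset ι)
    (hb : Summable fun ξ => b ξ ^ 2) :
    Summable fun ξ => (∑ η ∈ A, a η * b (ξ - η)) ^ 2 := by
  refine .of_nonneg_of_le (fun _ => sq_nonneg _) (fun ξ => sq_sum_le_card_mul_sum_sq) ?_
  refine (summable_sum fun η _ => ?_).mul_left _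
  simp only [mul_pow]
  exact ((Equiv.subRight η).summable_iff.mpr hb).mul_left _

/-- Young's inequality `‖a ∗ b‖₂ ≤ ‖a‖₁ ‖b‖₂`. -/
theorem tsum_sq_sum_mul_sub_le {a b : ι → ℝ} (A : Finset ι)
    (ha : ∀ η ∈ A, 0 ≤ a η) (hb : Summable fun ξ => b ξ ^ 2) :
    ∑' ξ, (∑ η ∈ A, a η * b (ξ - η)) ^ 2 ≤ (∑ η ∈ A, a η) ^ 2 * ∑' ξ, b ξ ^ 2 := by
  have hshift : ∀ η, Summable fun ξ => b (ξ - η) ^ 2 := fun η =>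
    (Equiv.subRight η).summable_iff.mpr hb
  calc ∑' ξ, (∑ η ∈ A, a η * b (ξ - η)) ^ 2
      ≤ ∑' ξ, (∑ η ∈ A, a η) * ∑ η ∈ A, a η * b (ξ - η) ^ 2 := by
        refine Summable.tsum_le_tsum (fun ξ => ?_) (summable_sq_sum_mul_sub A hb)
          ((summable_sum fun η _ => (hshift η).mul_left _).mul_left _)
        exact Finset.sum_sq_le_sum_mul_sum_of_sq_le_mul A ha
          (fun η hη => mul_nonneg (ha η hη) (sq_nonneg _)) fun η _ => (by ring : _ = _).le
    _ = (∑ η ∈ A, a η) ^ 2 * ∑' ξ, b ξ ^ 2 := by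
        rw [tsum_mul_left, Summable.tsum_finsetSum fun η _ => (hshift η).mul_left _]
        have htranslate : ∀ η, ∑' ξ, b (ξ - η) ^ 2 = ∑' ξ, b ξ ^ 2 := fun η =>
          (Equiv.subRight η).tsum_eq fun ξ => b ξ ^ 2
        simp_rw [tsum_mul_left, htranslate]
        rw [← Finset.sum_mul]
        ring

variable {R : Type*} [NormedRing R] {σ : ι → ℝ} {c : ℝ}
  {f g : ι → R} {A B : Finset ι}

theorem mul_norm_tsum_mul_sub_le (hσ0 : ∀ ξ, 0 ≤ σ ξ)
    (hσ : ∀ η ζ, σ (η + ζ) ≤ c * (σ η + σ ζ))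
    (hfA : ∀ η ∉ A, f η = 0) (hgB : ∀ η ∉ B, g η = 0) (ξ : ι) :
    σ ξ * ‖∑' η, f η * g (ξ - η)‖ ≤
      c * (∑ η ∈ B, ‖g η‖ * (σ (ξ - η) * ‖f (ξ - η)‖) +
        ∑ η ∈ A, ‖f η‖ * (σ (ξ - η) * ‖g (ξ - η)‖)) := by
  have hswap := sum_mul_sub_comm (a := fun η => σ η * ‖f η‖) (b := fun η => ‖g η‖) (A := A) (B := B)
    (fun η hη => by simp [hfA η hη]) (fun η hη => by simp [hgB η hη]) ξ
  rw [tsum_eq_sum (s := A) fun η hη => by rw [hfA η hη, zero_mul]]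
  calc σ ξ * ‖∑ η ∈ A, f η * g (ξ - η)‖ ≤ σ ξ * ∑ η ∈ A, ‖f η‖ * ‖g (ξ - η)‖ := by
        gcongr
        · exact hσ0 ξ
        · exact (norm_sum_le _ _).trans (Finset.sum_le_sum fun η _ => norm_mul_le _ _)
    _ ≤ ∑ η ∈ A, c * (σ η + σ (ξ - η)) * (‖f η‖ * ‖g (ξ - η)‖) := by
        rw [Finset.mul_sum]
        gcongr with η
        simpa using hσ η (ξ - η)
    _ = c * (∑ η ∈ A, σ η * ‖f η‖ * ‖g (ξ - η)‖ +
          ∑ η ∈ A, ‖f η‖ * (σ (ξ - η) * ‖g (ξ - η)‖)) := by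
        rw [← Finset.sum_add_distrib, Finset.mul_sum]
        exact Finset.sum_congr rfl fun η _ => by ring
    _ = _ := by rw [hswap]

theorem sq_mul_sq_norm_tsum_mul_sub_le (hσ0 : ∀ ξ, 0 ≤ σ ξ)
    (hσ : ∀ η ζ, σ (η + ζ) ≤ c * (σ η + σ ζ))
    (hfA : ∀ η ∉ A, f η = 0) (hgB : ∀ η ∉ B, g η = 0) (ξ : ι) :
    σ ξ ^ 2 * ‖∑' η, f η * g (ξ - η)‖ ^ 2 ≤
      2 * c ^ 2 * ((∑ η ∈ B, ‖g η‖ * (σ (ξ - η) * ‖f (ξ - η)‖)) ^ 2 +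
        (∑ η ∈ A, ‖f η‖ * (σ (ξ - η) * ‖g (ξ - η)‖)) ^ 2) := by
  rw [← mul_pow]
  refine (pow_le_pow_left₀ (mul_nonneg (hσ0 ξ) (norm_nonneg _))
    (mul_norm_tsum_mul_sub_le hσ0 hσ hfA hgB ξ) 2).trans ?_
  rw [mul_pow, mul_assoc, mul_left_comm]
  gcongr
  exact add_sq_le

theorem summable_sq_mul_sq_norm_tsum_mul_sub (hσ0 : ∀ ξ, 0 ≤ σ ξ)
    (hσ : ∀ η ζ, σ (η + ζ) ≤ c * (σ η + σ ζ))
    (hfA : ∀ η ∉ A, f η = 0) (hgB : ∀ η ∉ B, g η = 0) :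
    Summable fun ξ => σ ξ ^ 2 * ‖∑' η, f η * g (ξ - η)‖ ^ 2 := by
  have hF : Summable fun ξ => (σ ξ * ‖f ξ‖) ^ 2 :=
    summable_of_ne_finset_zero (s := A) fun ξ hξ => by simp [hfA ξ hξ]
  have hG : Summable fun ξ => (σ ξ * ‖g ξ‖) ^ 2 :=
    summable_of_ne_finset_zero (s := B) fun ξ hξ => by simp [hgB ξ hξ]
  exact .of_nonneg_of_le (fun ξ => by positivity) (sq_mul_sq_norm_tsum_mul_sub_le hσ0 hσ hfA hgB)
    (((summable_sq_sum_mul_sub B hF).add (summable_sq_sum_mul_sub A hG)).mul_left _)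

theorem tsum_sq_mul_sq_norm_tsum_mul_sub_le (hσ0 : ∀ ξ, 0 < σ ξ)
    (hσ : ∀ η ζ, σ (η + ζ) ≤ c * (σ η + σ ζ)) (hsum : Summable fun ξ => (σ ξ ^ 2)⁻¹)
    (hfA : ∀ η ∉ A, f η = 0) (hgB : ∀ η ∉ B, g η = 0) :
    ∑' ξ, σ ξ ^ 2 * ‖∑' η, f η * g (ξ - η)‖ ^ 2 ≤
      4 * c ^ 2 * (∑' ξ, (σ ξ ^ 2)⁻¹) * (∑' ξ, σ ξ ^ 2 * ‖f ξ‖ ^ 2) *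
        ∑' ξ, σ ξ ^ 2 * ‖g ξ‖ ^ 2 := by
  have hσ0' : ∀ ξ, 0 ≤ σ ξ := fun ξ => (hσ0 ξ).le
  have hF : Summable fun ξ => (σ ξ * ‖f ξ‖) ^ 2 :=
    summable_of_ne_finset_zero (s := A) fun ξ hξ => by simp [hfA ξ hξ]
  have hG : Summable fun ξ => (σ ξ * ‖g ξ‖) ^ 2 :=
    summable_of_ne_finset_zero (s := B) fun ξ hξ => by simp [hgB ξ hξ]
  have hf₁ : (∑ η ∈ A, ‖f η‖) ^ 2 ≤ (∑' ξ, (σ ξ ^ 2)⁻¹) * ∑' ξ, σ ξ ^ 2 * ‖f ξ‖ ^ 2 :=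
    sq_sum_le_tsum_inv_mul_tsum A (fun ξ => pow_pos (hσ0 ξ) 2) hsum fun ξ hξ => by simp [hfA ξ hξ]
  have hg₁ : (∑ η ∈ B, ‖g η‖) ^ 2 ≤ (∑' ξ, (σ ξ ^ 2)⁻¹) * ∑' ξ, σ ξ ^ 2 * ‖g ξ‖ ^ 2 :=
    sq_sum_le_tsum_inv_mul_tsum B (fun ξ => pow_pos (hσ0 ξ) 2) hsum fun ξ hξ => by simp [hgB ξ hξ]
  have hP := tsum_sq_sum_mul_sub_le B (fun η _ => norm_nonneg (g η)) hF
  have hQ := tsum_sq_sum_mul_sub_le A (fun η _ => norm_nonneg (f η)) hG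
  simp only [mul_pow] at hP hQ
  calc ∑' ξ, σ ξ ^ 2 * ‖∑' η, f η * g (ξ - η)‖ ^ 2
      ≤ ∑' ξ, 2 * c ^ 2 * ((∑ η ∈ B, ‖g η‖ * (σ (ξ - η) * ‖f (ξ - η)‖)) ^ 2 +
          (∑ η ∈ A, ‖f η‖ * (σ (ξ - η) * ‖g (ξ - η)‖)) ^ 2) :=
        Summable.tsum_le_tsum (sq_mul_sq_norm_tsum_mul_sub_le hσ0' hσ hfA hgB)
          (summable_sq_mul_sq_norm_tsum_mul_sub hσ0' hσ hfA hgB)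
          (((summable_sq_sum_mul_sub B hF).add (summable_sq_sum_mul_sub A hG)).mul_left _)
    _ = 2 * c ^ 2 * (∑' ξ, (∑ η ∈ B, ‖g η‖ * (σ (ξ - η) * ‖f (ξ - η)‖)) ^ 2 +
          ∑' ξ, (∑ η ∈ A, ‖f η‖ * (σ (ξ - η) * ‖g (ξ - η)‖)) ^ 2) := by
        rw [tsum_mul_left, Summable.tsum_add (summable_sq_sum_mul_sub B hF)
          (summable_sq_sum_mul_sub A hG)]
    _ ≤ 2 * c ^ 2 * ((∑' ξ, (σ ξ ^ 2)⁻¹) * (∑' ξ, σ ξ ^ 2 * ‖g ξ‖ ^ 2) *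
            ∑' ξ, σ ξ ^ 2 * ‖f ξ‖ ^ 2 +
          (∑' ξ, (σ ξ ^ 2)⁻¹) * (∑' ξ, σ ξ ^ 2 * ‖f ξ‖ ^ 2) * ∑' ξ, σ ξ ^ 2 * ‖g ξ‖ ^ 2) := by
        have hX : 0 ≤ ∑' ξ, σ ξ ^ 2 * ‖f ξ‖ ^ 2 := tsum_nonneg fun ξ => by positivity
        have hY : 0 ≤ ∑' ξ, σ ξ ^ 2 * ‖g ξ‖ ^ 2 := tsum_nonneg fun ξ => by positivity
        gcongr
        · exact hP.trans (mul_le_mul_of_nonneg_right hg₁ hX)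
        · exact hQ.trans (mul_le_mul_of_nonneg_right hf₁ hY)
    _ = _ := by ring

end WeightedConvolution

theorem add_rpow_le_two_rpow_mul {a b t : ℝ} (ha : 0 ≤ a) (hb : 0 ≤ b) (ht : 0 ≤ t) :
    (a + b) ^ t ≤ 2 ^ t * (a ^ t + b ^ t) := by
  calc (a + b) ^ t ≤ (2 * max a b) ^ t :=
        Real.rpow_le_rpow (add_nonneg ha hb) (by linarith [le_max_left a b, le_max_right a b]) ht
    _ = 2 ^ t * max a b ^ t := Real.mul_rpow zero_le_two (le_max_of_le_left ha)
    _ ≤ 2 ^ t * (a ^ t + b ^ t) := by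
        gcongr
        rcases max_cases a b with ⟨h, _⟩ | ⟨h, _⟩ <;> rw [h]
        · exact le_add_of_nonneg_right (Real.rpow_nonneg hb t)
        · exact le_add_of_nonneg_left (Real.rpow_nonneg ha t)

noncomputable def sobolevWeight {d : ℕ} (ξ : Fin d → ℤ) : ℝ := 1 + ∑ i, (ξ i : ℝ) ^ 2

section SobolevWeight

variable {d : ℕ}

theorem one_le_sobolevWeight (ξ : Fin d → ℤ) : 1 ≤ sobolevWeight ξ :=
  le_add_of_nonneg_right (Finset.sum_nonneg fun _ _ => sq_nonneg _)

theorem sobolevWeight_pos (ξ : Fin d → ℤ) : 0 < sobolevWeight ξ :=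
  one_pos.trans_le (one_le_sobolevWeight ξ)

theorem sobolevWeight_rpow_pos (ξ : Fin d → ℤ) (t : ℝ) : 0 < sobolevWeight ξ ^ t :=
  Real.rpow_pos_of_pos (sobolevWeight_pos ξ) t

theorem sobolevWeight_add_le (η ζ : Fin d → ℤ) :
    sobolevWeight (η + ζ) ≤ 2 * (sobolevWeight η + sobolevWeight ζ) := by
  have hsum : ∑ i, ((η + ζ) i : ℝ) ^ 2 ≤ 2 * (∑ i, (η i : ℝ) ^ 2 + ∑ i, (ζ i : ℝ) ^ 2) := by
    rw [← Finset.sum_add_distrib, Finset.mul_sum]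
    exact Finset.sum_le_sum fun i _ => by simp only [Pi.add_apply, Int.cast_add]; exact add_sq_le
  unfold sobolevWeight
  linarith

/-- Peetre's inequality. -/
theorem sobolevWeight_add_rpow_le {t : ℝ} (ht : 0 ≤ t) (η ζ : Fin d → ℤ) :
    sobolevWeight (η + ζ) ^ t ≤ 4 ^ t * (sobolevWeight η ^ t + sobolevWeight ζ ^ t) := by
  have hη := (sobolevWeight_pos η).le
  have hζ := (sobolevWeight_pos ζ).le
  calc sobolevWeight (η + ζ) ^ t ≤ (2 * sobolevWeight η + 2 * sobolevWeight ζ) ^ t :=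
        Real.rpow_le_rpow (sobolevWeight_pos _).le (by linarith [sobolevWeight_add_le η ζ]) ht
    _ ≤ 2 ^ t * ((2 * sobolevWeight η) ^ t + (2 * sobolevWeight ζ) ^ t) :=
        add_rpow_le_two_rpow_mul (by positivity) (by positivity) ht
    _ = 4 ^ t * (sobolevWeight η ^ t + sobolevWeight ζ ^ t) := by
        rw [Real.mul_rpow zero_le_two hη, Real.mul_rpow zero_le_two hζ,
          show (4 : ℝ) = 2 * 2 by norm_num, Real.mul_rpow zero_le_two zero_le_two]
        ring

open Module Submodule in
/-- Comparison with the `p`-series `∑ ‖z‖^(-2s)` of the lattice `ℤ^d ⊆ ℝ^d` (sup norm). -/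
theorem summable_sobolevWeight_rpow_neg {s : ℝ} (hs : (d : ℝ) / 2 < s) :
    Summable fun ξ : Fin d → ℤ => sobolevWeight ξ ^ (-s) := by
  let b := (Pi.basisFun ℝ (Fin d)).restrictScalars ℤ
  have hrank : finrank ℤ (span ℤ (Set.range (Pi.basisFun ℝ (Fin d)))) = d := by
    simp [finrank_eq_card_basis b]
  have hcoe : ∀ ξ : Fin d → ℤ, ((b.equivFun.symm ξ : _) : Fin d → ℝ) = fun i => (ξ i : ℝ) := by
    intro ξ; ext i; simp [b, Basis.equivFun_symm_apply, Pi.single_apply]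
  have hlat := (ZLattice.summable_norm_rpow _ (-(2 * s)) (by rw [hrank]; linarith)).comp_injective
    b.equivFun.symm.injective
  refine Summable.of_norm_bounded_eventually hlat ?_
  filter_upwards [Set.Finite.compl_mem_cofinite (Set.finite_singleton 0)] with ξ hξ
  set v : Fin d → ℝ := fun i => (ξ i : ℝ)
  have hv : 0 < ‖v‖ := norm_pos_iff.mpr fun h => hξ (funext fun i => by
    simpa [v] using congrFun h i)
  have hvw : ‖v‖ ^ 2 ≤ sobolevWeight ξ := by
    have hsqrt : ‖v‖ ≤ √(∑ i, (ξ i : ℝ) ^ 2) :=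
      (pi_norm_le_iff_of_nonneg (by positivity)).mpr fun i => by
        rw [Real.norm_eq_abs]
        exact Real.abs_le_sqrt (Finset.single_le_sum (f := fun j => (ξ j : ℝ) ^ 2)
          (fun j _ => sq_nonneg _) (Finset.mem_univ i))
    unfold sobolevWeight
    nlinarith [Real.sq_sqrt (by positivity : (0 : ℝ) ≤ ∑ i, (ξ i : ℝ) ^ 2)]
  have hs0 : 0 ≤ s := le_trans (by positivity) hs.le
  simp only [Function.comp_apply, Submodule.coe_norm, hcoe]
  rw [Real.norm_of_nonneg ((sobolevWeight_rpow_pos ξ _).le)]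
  calc sobolevWeight ξ ^ (-s) ≤ (‖v‖ ^ 2) ^ (-s) :=
        Real.rpow_le_rpow_of_nonpos (by positivity) hvw (by linarith)
    _ = ‖v‖ ^ (-(2 * s)) := by
        rw [← Real.rpow_natCast, ← Real.rpow_mul hv.le]; push_cast; ring_nf

theorem tsum_sobolevWeight_rpow_mul_le {r s : ℝ} (hrs : r ≤ s) {u : (Fin d → ℤ) → ℝ}
    (hu0 : ∀ ξ, 0 ≤ u ξ) (hu : Summable fun ξ => sobolevWeight ξ ^ s * u ξ) :
    ∑' ξ, sobolevWeight ξ ^ r * u ξ ≤ ∑' ξ, sobolevWeight ξ ^ s * u ξ := by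
  have hle : ∀ ξ, sobolevWeight ξ ^ r * u ξ ≤ sobolevWeight ξ ^ s * u ξ := fun ξ =>
    mul_le_mul_of_nonneg_right
      (Real.rpow_le_rpow_of_exponent_le (one_le_sobolevWeight ξ) hrs) (hu0 ξ)
  exact Summable.tsum_le_tsum hle
    (.of_nonneg_of_le (fun ξ => mul_nonneg (sobolevWeight_rpow_pos ξ _).le (hu0 ξ)) hle hu) hu

end SobolevWeight

theorem tsum_sobolevWeight_rpow_mul_sq_norm_conv_le {d : ℕ} {r s₁ s₂ : ℝ} (h1 : r ≤ s₁)
    (h2 : s₁ ≤ s₂) (h3 : (d : ℝ) / 2 < s₁) {f g : (Fin d → ℤ) → ℂ} {A B : Finset (Fin d → ℤ)}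
    (hfA : ∀ η ∉ A, f η = 0) (hgB : ∀ η ∉ B, g η = 0) :
    ∑' ξ, sobolevWeight ξ ^ r * ‖∑' η, f η * g (ξ - η)‖ ^ 2 ≤
      4 * (4 ^ (s₁ / 2)) ^ 2 * (∑' ξ : Fin d → ℤ, sobolevWeight ξ ^ (-s₁)) *
        (∑' ξ, sobolevWeight ξ ^ s₁ * ‖f ξ‖ ^ 2) * ∑' ξ, sobolevWeight ξ ^ s₂ * ‖g ξ‖ ^ 2 := by
  have hs₁ : 0 ≤ s₁ := le_trans (by positivity) h3.le
  have hσsq : ∀ ξ : Fin d → ℤ, (sobolevWeight ξ ^ (s₁ / 2)) ^ 2 = sobolevWeight ξ ^ s₁ := by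
    intro ξ
    rw [← Real.rpow_natCast, ← Real.rpow_mul (sobolevWeight_pos ξ).le]
    norm_num
  have hσ0 : ∀ ξ : Fin d → ℤ, 0 < sobolevWeight ξ ^ (s₁ / 2) := fun ξ =>
    sobolevWeight_rpow_pos ξ _
  have hσ : ∀ η ζ : Fin d → ℤ, sobolevWeight (η + ζ) ^ (s₁ / 2) ≤
      4 ^ (s₁ / 2) * (sobolevWeight η ^ (s₁ / 2) + sobolevWeight ζ ^ (s₁ / 2)) :=
    sobolevWeight_add_rpow_le (by linarith)
  have hK : Summable fun ξ : Fin d → ℤ => ((sobolevWeight ξ ^ (s₁ / 2)) ^ 2)⁻¹ := by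
    simpa only [hσsq, Real.rpow_neg (sobolevWeight_pos _).le] using
      summable_sobolevWeight_rpow_neg h3
  have hconv := tsum_sq_mul_sq_norm_tsum_mul_sub_le hσ0 hσ hK hfA hgB
  have hsum := summable_sq_mul_sq_norm_tsum_mul_sub (fun ξ => (hσ0 ξ).le) hσ hfA hgB
  simp only [hσsq, ← Real.rpow_neg (sobolevWeight_pos _).le] at hconv hsum
  have hg : Summable fun ξ => sobolevWeight ξ ^ s₂ * ‖g ξ‖ ^ 2 :=
    summable_of_ne_finset_zero (s := B) fun ξ hξ => by simp [hgB ξ hξ]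
  calc ∑' ξ, sobolevWeight ξ ^ r * ‖∑' η, f η * g (ξ - η)‖ ^ 2
      ≤ ∑' ξ, sobolevWeight ξ ^ s₁ * ‖∑' η, f η * g (ξ - η)‖ ^ 2 :=
        tsum_sobolevWeight_rpow_mul_le h1 (fun _ => sq_nonneg _) hsum
    _ ≤ _ := hconv
    _ ≤ _ := by
        have hK0 : 0 ≤ ∑' ξ : Fin d → ℤ, sobolevWeight ξ ^ (-s₁) :=
          tsum_nonneg fun ξ => (sobolevWeight_rpow_pos ξ _).le
        have hX : 0 ≤ ∑' ξ, sobolevWeight ξ ^ s₁ * ‖f ξ‖ ^ 2 :=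
          tsum_nonneg fun ξ => mul_nonneg ((sobolevWeight_rpow_pos ξ _).le) (sq_nonneg _)
        exact mul_le_mul_of_nonneg_left
          (tsum_sobolevWeight_rpow_mul_le h2 (fun _ => sq_nonneg _) hg) (by positivity)

theorem torus_product_high_low_general (d : ℕ) (r s₁ s₂ : ℝ)
    (h1 : r ≤ s₁) (h2 : s₁ ≤ s₂) (h3 : (d : ℝ) / 2 < s₁) :
    ∃ C : ℝ, 0 < C ∧
      ∀ f g : (Fin d → ℤ) → ℂ,
        (Function.support f).Finite → (Function.support g).Finite →
        Real.sqrt (∑' ξ : Fin d → ℤ,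
            (1 + ∑ i, ((ξ i : ℝ)) ^ 2) ^ r * ‖∑' η : Fin d → ℤ, f η * g (ξ - η)‖ ^ 2) ≤
          C * Real.sqrt (∑' ξ : Fin d → ℤ, (1 + ∑ i, ((ξ i : ℝ)) ^ 2) ^ s₁ * ‖f ξ‖ ^ 2)
            * Real.sqrt (∑' ξ : Fin d → ℤ, (1 + ∑ i, ((ξ i : ℝ)) ^ 2) ^ s₂ * ‖g ξ‖ ^ 2) := by
  set K := ∑' ξ : Fin d → ℤ, sobolevWeight ξ ^ (-s₁)
  have hK : 0 < K := (summable_sobolevWeight_rpow_neg h3).tsum_pos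
    (fun ξ => (sobolevWeight_rpow_pos ξ _).le) 0 (sobolevWeight_rpow_pos 0 _)
  refine ⟨2 * 4 ^ (s₁ / 2) * √K, by positivity, fun f g hf hg => ?_⟩
  have hsq := tsum_sobolevWeight_rpow_mul_sq_norm_conv_le h1 h2 h3 (A := hf.toFinset)
    (B := hg.toFinset) (f := f) (g := g) (by simp) (by simp)
  have hX : 0 ≤ ∑' ξ, sobolevWeight ξ ^ s₁ * ‖f ξ‖ ^ 2 :=
    tsum_nonneg fun ξ => mul_nonneg ((sobolevWeight_rpow_pos ξ _).le) (sq_nonneg _)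
  calc √(∑' ξ, sobolevWeight ξ ^ r * ‖∑' η, f η * g (ξ - η)‖ ^ 2)
      ≤ √((2 * 4 ^ (s₁ / 2) * √K) ^ 2 * (∑' ξ, sobolevWeight ξ ^ s₁ * ‖f ξ‖ ^ 2) *
          ∑' ξ, sobolevWeight ξ ^ s₂ * ‖g ξ‖ ^ 2) := by
        refine Real.sqrt_le_sqrt (hsq.trans_eq ?_)
        rw [mul_pow, mul_pow, Real.sq_sqrt hK.le]
        ring
    _ = 2 * 4 ^ (s₁ / 2) * √K * √(∑' ξ, sobolevWeight ξ ^ s₁ * ‖f ξ‖ ^ 2) *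
          √(∑' ξ, sobolevWeight ξ ^ s₂ * ‖g ξ‖ ^ 2) := by
        rw [Real.sqrt_mul (by positivity), Real.sqrt_mul (by positivity),
          Real.sqrt_sq (by positivity)]

/-- Fractional Sobolev product estimate on `𝕋^d` in Fourier-series form,
high–low case: for `0 ≤ r ≤ s₁ ≤ s₂` with `s₁ > d/2`,
`‖fg‖_{H^r} ≲ ‖f‖_{H^{s₁}} ‖g‖_{H^{s₂}}`, products corresponding to convolution of the
(finitely supported) Fourier coefficient sequences. -/
theorem torus_product_high_low (d : ℕ) (hd : 1 ≤ d) (r s₁ s₂ : ℝ)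
    (h0 : 0 ≤ r) (h1 : r ≤ s₁) (h2 : s₁ ≤ s₂) (h3 : (d : ℝ) / 2 < s₁) :
    ∃ C : ℝ, 0 < C ∧
      ∀ f g : (Fin d → ℤ) → ℂ,
        (Function.support f).Finite → (Function.support g).Finite →
        Real.sqrt (∑' ξ : Fin d → ℤ,
            (1 + ∑ i, ((ξ i : ℝ)) ^ 2) ^ r * ‖∑' η : Fin d → ℤ, f η * g (ξ - η)‖ ^ 2) ≤
          C * Real.sqrt (∑' ξ : Fin d → ℤ, (1 + ∑ i, ((ξ i : ℝ)) ^ 2) ^ s₁ * ‖f ξ‖ ^ 2)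
            * Real.sqrt (∑' ξ : Fin d → ℤ, (1 + ∑ i, ((ξ i : ℝ)) ^ 2) ^ s₂ * ‖g ξ‖ ^ 2) :=
  torus_product_high_low_general d r s₁ s₂ h1 h2 h3
end
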